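/- For all p, q ∈ ℝⁿ and ω ∈ S^{n−1}, the Glassey–Strauss post-collisional variables satisfy the invariance ω·(p⁰q − q⁰p) = ω·(q′⁰p′ − p′⁰q′). Consequently a(p′, q′, ω) = −a(p, q, ω), so that applying the Glassey–Strauss collision map to (p′, q′) with the same ω returns (p, q). -/

import Mathlib

noncomputable section

open MeasureTheory Metric Matrix

namespace RelBoltz

/-- The energy `p⁰ = √(c² + |p|²)` of a relativistic particle with momentum `p ∈ ℝⁿ`. -/
def energy (n : ℕ) (c : ℝ) (p : EuclideanSpace ℝ (Fin n)) : ℝ :=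
  Real.sqrt (c ^ 2 + ‖p‖ ^ 2)

/-- The Euclidean dot product on `ℝⁿ`. -/
def dot (n : ℕ) (p q : EuclideanSpace ℝ (Fin n)) : ℝ := ∑ i, p i * q i

/-- The relative momentum `ϱ(p,q) = √(2(p⁰q⁰ − p·q − c²))`. -/
def relMom (n : ℕ) (c : ℝ) (p q : EuclideanSpace ℝ (Fin n)) : ℝ :=
  Real.sqrt (2 * (energy n c p * energy n c q - dot n p q - c ^ 2))

/-- The quantity `s(p,q) = 2(p⁰q⁰ − p·q + c²)`. -/
def sQ (n : ℕ) (c : ℝ) (p q : EuclideanSpace ℝ (Fin n)) : ℝ :=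
  2 * (energy n c p * energy n c q - dot n p q + c ^ 2)

/-- The Minkowski metric `g = diag(−1, 1, …, 1)` as a `(1+n)×(1+n)` matrix. -/
def eta (n : ℕ) : Matrix (Fin (n + 1)) (Fin (n + 1)) ℝ :=
  Matrix.diagonal fun μ => if μ = 0 then -1 else 1

/-- A proper Lorentz transformation: `det Λ = 1` and `Λᵀ g Λ = g`. -/
def IsLorentz (n : ℕ) (Λ : Matrix (Fin (n + 1)) (Fin (n + 1)) ℝ) : Prop :=
  Λ.det = 1 ∧ Λᵀ * eta n * Λ = eta n

/-- The four-vector `p^μ = (p⁰, p) ∈ ℝ^{1+n}`. -/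
def fourVec (n : ℕ) (c : ℝ) (p : EuclideanSpace ℝ (Fin n)) : Fin (n + 1) → ℝ :=
  Fin.cons (energy n c p) fun i => p i

/-- Condition (CM): `Λ^μ_ν (p^ν + q^ν) = (√s, 0, …, 0)`. -/
def CM (n : ℕ) (c : ℝ) (Λ : Matrix (Fin (n + 1)) (Fin (n + 1)) ℝ)
    (p q : EuclideanSpace ℝ (Fin n)) : Prop :=
  Λ.mulVec (fourVec n c p + fourVec n c q) = Fin.cons (Real.sqrt (sQ n c p q)) (fun _ => (0 : ℝ))

/-- The candidate inverse `g Λᵀ g` of a Lorentz transformation. -/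
def Linv (n : ℕ) (Λ : Matrix (Fin (n + 1)) (Fin (n + 1)) ℝ) :
    Matrix (Fin (n + 1)) (Fin (n + 1)) ℝ :=
  eta n * Λᵀ * eta n

/-- The quantity `ρ = (p⁰+q⁰)/√s` appearing in the boost matrix. -/
def rhoB (n : ℕ) (c : ℝ) (p q : EuclideanSpace ℝ (Fin n)) : ℝ :=
  (energy n c p + energy n c q) / Real.sqrt (sQ n c p q)

/-- The boost matrix `Λ_b = [[ρ, −ρ vᵀ], [−ρ v, Iₙ + (ρ−1) v vᵀ/|v|²]]`
with `v = (p+q)/(p⁰+q⁰)`. -/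
def boost (n : ℕ) (c : ℝ) (p q : EuclideanSpace ℝ (Fin n)) :
    Matrix (Fin (n + 1)) (Fin (n + 1)) ℝ :=
  Matrix.of fun μ ν =>
    Fin.cases
      (Fin.cases (rhoB n c p q)
        (fun j => -rhoB n c p q * ((p j + q j) / (energy n c p + energy n c q))) ν)
      (fun i =>
        Fin.cases (-rhoB n c p q * ((p i + q i) / (energy n c p + energy n c q)))
          (fun j =>
            (if i = j then (1 : ℝ) else 0) +
              (rhoB n c p q - 1) *
                ((p i + q i) / (energy n c p + energy n c q)) *
                ((p j + q j) / (energy n c p + energy n c q)) /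
                (∑ k, ((p k + q k) / (energy n c p + energy n c q)) ^ 2)) ν) μ

/-- The vector `k ∈ ℝⁿ`, `k^i = Λ^i_μ (p^μ − q^μ)` (spatial rows of `Λ` applied
to `p^μ − q^μ`). -/
def kvec (n : ℕ) (c : ℝ) (Λ : Matrix (Fin (n + 1)) (Fin (n + 1)) ℝ)
    (p q : EuclideanSpace ℝ (Fin n)) : EuclideanSpace ℝ (Fin n) :=
  WithLp.toLp 2 fun i => Λ.mulVec (fourVec n c p - fourVec n c q) i.succ

/-- `ω̄^μ = (√s/2, (ϱ/2)ω)`. -/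
def wbar (n : ℕ) (c : ℝ) (p q ω : EuclideanSpace ℝ (Fin n)) : Fin (n + 1) → ℝ :=
  Fin.cons (Real.sqrt (sQ n c p q) / 2) fun i => (relMom n c p q / 2) * ω i

/-- `ω̃^μ = (√s/2, −(ϱ/2)ω)`. -/
def wtil (n : ℕ) (c : ℝ) (p q ω : EuclideanSpace ℝ (Fin n)) : Fin (n + 1) → ℝ :=
  Fin.cons (Real.sqrt (sQ n c p q) / 2) fun i => -(relMom n c p q / 2) * ω i

/-- The center-of-momentum post-collisional four-vector `p′^μ = (Λ⁻¹)^μ_ν ω̄^ν`. -/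
def postP (n : ℕ) (c : ℝ) (Λ : Matrix (Fin (n + 1)) (Fin (n + 1)) ℝ)
    (p q ω : EuclideanSpace ℝ (Fin n)) : Fin (n + 1) → ℝ :=
  (Linv n Λ).mulVec (wbar n c p q ω)

/-- The center-of-momentum post-collisional four-vector `q′^μ = (Λ⁻¹)^μ_ν ω̃^ν`. -/
def postQ (n : ℕ) (c : ℝ) (Λ : Matrix (Fin (n + 1)) (Fin (n + 1)) ℝ)
    (p q ω : EuclideanSpace ℝ (Fin n)) : Fin (n + 1) → ℝ :=
  (Linv n Λ).mulVec (wtil n c p q ω)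

/-- The spatial part of a vector in `ℝ^{1+n}`. -/
def spat (n : ℕ) (u : Fin (n + 1) → ℝ) : EuclideanSpace ℝ (Fin n) :=
  WithLp.toLp 2 fun i => u i.succ

/-- `D₁ = (p⁰+q⁰)² − (ω·(p+q))²`. -/
def D1 (n : ℕ) (c : ℝ) (p q ω : EuclideanSpace ℝ (Fin n)) : ℝ :=
  (energy n c p + energy n c q) ^ 2 - dot n ω (p + q) ^ 2

/-- `D₂ = (p⁰+q⁰){ω·(p⁰q − q⁰p)}`. -/
def D2 (n : ℕ) (c : ℝ) (p q ω : EuclideanSpace ℝ (Fin n)) : ℝ :=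
  (energy n c p + energy n c q) * dot n ω (energy n c p • q - energy n c q • p)

/-- `a(p,q,ω) = 2(p⁰+q⁰){ω·(p⁰q − q⁰p)}/D₁`. -/
def aGS (n : ℕ) (c : ℝ) (p q ω : EuclideanSpace ℝ (Fin n)) : ℝ :=
  2 * (energy n c p + energy n c q) * dot n ω (energy n c p • q - energy n c q • p) /
    D1 n c p q ω

/-- `N⁰(p,q,ω) = 2{ω·(p+q)}{ω·(p⁰q − q⁰p)}/D₁`. -/
def N0 (n : ℕ) (c : ℝ) (p q ω : EuclideanSpace ℝ (Fin n)) : ℝ :=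
  2 * dot n ω (p + q) * dot n ω (energy n c p • q - energy n c q • p) / D1 n c p q ω

/-- The Glassey–Strauss post-collisional momentum `p′ = p + a(p,q,ω)ω`. -/
def gsP (n : ℕ) (c : ℝ) (p q ω : EuclideanSpace ℝ (Fin n)) : EuclideanSpace ℝ (Fin n) :=
  p + aGS n c p q ω • ω

/-- The Glassey–Strauss post-collisional momentum `q′ = q − a(p,q,ω)ω`. -/
def gsQ (n : ℕ) (c : ℝ) (p q ω : EuclideanSpace ℝ (Fin n)) : EuclideanSpace ℝ (Fin n) :=
  q - aGS n c p q ω • ω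

/-- The Glassey–Strauss kernel `B(p,q,ω)`. -/
def BGS (n : ℕ) (c : ℝ) (p q ω : EuclideanSpace ℝ (Fin n)) : ℝ :=
  c * (energy n c p + energy n c q) ^ 2 * energy n c p * energy n c q *
    |dot n ω ((energy n c p)⁻¹ • p - (energy n c q)⁻¹ • q)| / D1 n c p q ω ^ 2

/-- The dimensional factor `A(p,q,ω)`. -/
def AGS (n : ℕ) (c : ℝ) (p q ω : EuclideanSpace ℝ (Fin n)) : ℝ :=
  (4 / relMom n c p q) * (energy n c p + energy n c q) * energy n c p * energy n c q *
    |dot n ω ((energy n c p)⁻¹ • p - (energy n c q)⁻¹ • q)| / D1 n c p q ω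

/-- The dimensional Glassey–Strauss kernel `B_n(p,q,ω) = B(p,q,ω)·(A(p,q,ω))^{n−3}`. -/
def Bn (n : ℕ) (c : ℝ) (p q ω : EuclideanSpace ℝ (Fin n)) : ℝ :=
  BGS n c p q ω * AGS n c p q ω ^ ((n : ℤ) - 3)

/-- The Møller velocity `v_ø(p,q) = (c/4) ϱ √s / (p⁰q⁰)`. -/
def moller (n : ℕ) (c : ℝ) (p q : EuclideanSpace ℝ (Fin n)) : ℝ :=
  (c / 4) * relMom n c p q * Real.sqrt (sQ n c p q) / (energy n c p * energy n c q)

/-- The explicit boost form of the combination appearing in the center-of-momentum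
post-collisional momenta. -/
def cmDir (n : ℕ) (c : ℝ) (p q ω : EuclideanSpace ℝ (Fin n)) : EuclideanSpace ℝ (Fin n) :=
  ω + ((rhoB n c p q - 1) * dot n (p + q) ω / ‖p + q‖ ^ 2) • (p + q)

/-- The explicit boost form of the center-of-momentum post-collisional momentum `p′`. -/
def cmP (n : ℕ) (c : ℝ) (p q ω : EuclideanSpace ℝ (Fin n)) : EuclideanSpace ℝ (Fin n) :=
  (1 / 2 : ℝ) • (p + q) + (relMom n c p q / 2) • cmDir n c p q ω

/-- The explicit boost form of the center-of-momentum post-collisional momentum `q′`. -/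
def cmQ (n : ℕ) (c : ℝ) (p q ω : EuclideanSpace ℝ (Fin n)) : EuclideanSpace ℝ (Fin n) :=
  (1 / 2 : ℝ) • (p + q) - (relMom n c p q / 2) • cmDir n c p q ω

/-- The explicit boost form of the vector `k`. -/
def kB (n : ℕ) (c : ℝ) (p q : EuclideanSpace ℝ (Fin n)) : EuclideanSpace ℝ (Fin n) :=
  (-(energy n c p - energy n c q) / Real.sqrt (sQ n c p q)) • (p + q) + (p - q) +
    ((rhoB n c p q - 1) * dot n (p + q) (p - q) / ‖p + q‖ ^ 2) • (p + q)

/-- The center-of-momentum scattering angle `cos θ_cm = (k/|k|)·ω`. -/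
def cosCM (n : ℕ) (c : ℝ) (p q ω : EuclideanSpace ℝ (Fin n)) : ℝ :=
  dot n (kB n c p q) ω / ‖kB n c p q‖

/-- The Glassey–Strauss scattering angle
`cos θ_gs = 1 − 8{ω·(p⁰q − q⁰p)}²/(D₁ϱ²)`. -/
def cosGS (n : ℕ) (c : ℝ) (p q ω : EuclideanSpace ℝ (Fin n)) : ℝ :=
  1 - 8 * dot n ω (energy n c p • q - energy n c q • p) ^ 2 /
    (D1 n c p q ω * relMom n c p q ^ 2)

/-- The surface measure on the unit sphere `S^{n−1} ⊂ ℝⁿ`. -/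
def sphMeasure (n : ℕ) : Measure (sphere (0 : EuclideanSpace ℝ (Fin n)) 1) :=
  (volume : Measure (EuclideanSpace ℝ (Fin n))).toSphere
/-!
Write `E, F` for the energies of `p, q`, `α, β` for `ω·p, ω·q` and `m = Eβ − Fα = ω·(p⁰q − q⁰p)`.
The coefficient `a` is exactly the one for which the collision conserves energy:
`p′⁰ = p⁰ + N⁰` and `q′⁰ = q⁰ − N⁰`, because `c² + |p + aω|² = (p⁰ + N⁰)²`. Together with the
identity `(E + F) a − (α + β) N⁰ = 2m`, this turns `ω·(q′⁰p′ − p′⁰q′)` into `m`. Since `p + q`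
and `p⁰ + q⁰` are conserved, so is `D₁`, hence `a(p′, q′, ω) = −a(p, q, ω)` and the collision
map is an involution.
-/

open scoped RealInnerProductSpace

lemma pos_mul_sub_sq_add_mul {E F α β : ℝ} (hα : |α| < E) (hβ : |β| < F) :
    0 < E * ((E + F) ^ 2 - (α + β) ^ 2) + 2 * (α + β) * (E * β - F * α) := by
  obtain ⟨hα₁, hα₂⟩ := abs_lt.1 hα
  obtain ⟨hβ₁, hβ₂⟩ := abs_lt.1 hβ
  have hsum : 2 * (E * ((E + F) ^ 2 - (α + β) ^ 2) + 2 * (α + β) * (E * β - F * α)) =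
      2 * (E + 2 * F) * ((E - α) * (E + α)) + (E - α) * (F + β) ^ 2 +
        (E + α) * (F - β) ^ 2 := by ring
  have h₁ : 0 < 2 * (E + 2 * F) * ((E - α) * (E + α)) :=
    mul_pos (by linarith) (mul_pos (by linarith) (by linarith))
  have h₂ : 0 ≤ (E - α) * (F + β) ^ 2 := mul_nonneg (by linarith) (sq_nonneg _)
  have h₃ : 0 ≤ (E + α) * (F - β) ^ 2 := mul_nonneg (by linarith) (sq_nonneg _)
  linarith

variable {n : ℕ} {c : ℝ}

lemma dot_eq_inner (p q : EuclideanSpace ℝ (Fin n)) : dot n p q = ⟪p, q⟫ := by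
  simp [dot, PiLp.inner_apply, mul_comm]

lemma sq_energy (p : EuclideanSpace ℝ (Fin n)) : energy n c p ^ 2 = c ^ 2 + ‖p‖ ^ 2 :=
  Real.sq_sqrt (by positivity)

lemma norm_lt_energy (hc : c ≠ 0) (p : EuclideanSpace ℝ (Fin n)) : ‖p‖ < energy n c p :=
  Real.lt_sqrt_of_sq_lt (lt_add_of_pos_left _ (by positivity))

lemma abs_inner_lt_energy (hc : c ≠ 0) {ω : EuclideanSpace ℝ (Fin n)} (hω : ‖ω‖ ≤ 1)
    (p : EuclideanSpace ℝ (Fin n)) : |⟪ω, p⟫| < energy n c p :=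
  calc |⟪ω, p⟫| ≤ ‖ω‖ * ‖p‖ := abs_real_inner_le_norm ω p
    _ ≤ ‖p‖ := mul_le_of_le_one_left (norm_nonneg p) hω
    _ < energy n c p := norm_lt_energy hc p

section Collision

variable {p q ω : EuclideanSpace ℝ (Fin n)}

lemma D1_pos (hc : c ≠ 0) (hω : ‖ω‖ ≤ 1) : 0 < D1 n c p q ω := by
  have hα := abs_lt.1 (abs_inner_lt_energy hc hω p)
  have hβ := abs_lt.1 (abs_inner_lt_energy hc hω q)
  rw [D1, dot_eq_inner, inner_add_right, sub_pos]
  exact sq_lt_sq' (by linarith) (by linarith)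

lemma D1_comm : D1 n c q p ω = D1 n c p q ω := by
  rw [D1, D1, add_comm q, add_comm (energy n c q)]

lemma aGS_comm : aGS n c q p ω = -aGS n c p q ω := by
  rw [aGS, aGS, D1_comm, ← neg_sub, dot_eq_inner, dot_eq_inner, inner_neg_right,
    add_comm (energy n c q)]
  ring

lemma N0_comm : N0 n c q p ω = -N0 n c p q ω := by
  rw [N0, N0, D1_comm, ← neg_sub, dot_eq_inner, dot_eq_inner, dot_eq_inner, dot_eq_inner,
    inner_neg_right, add_comm q]
  ring

lemma gsQ_eq_gsP_swap : gsQ n c p q ω = gsP n c q p ω := by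
  rw [gsQ, gsP, aGS_comm, neg_smul, sub_neg_eq_add]

lemma gsP_add_gsQ : gsP n c p q ω + gsQ n c p q ω = p + q := by
  rw [gsP, gsQ]
  abel

lemma energy_add_N0_pos (hc : c ≠ 0) (hω : ‖ω‖ ≤ 1) : 0 < energy n c p + N0 n c p q ω := by
  have hD := D1_pos (p := p) (q := q) hc hω
  have hnum := pos_mul_sub_sq_add_mul (abs_inner_lt_energy hc hω p)
    (abs_inner_lt_energy hc hω q)
  rw [N0]
  rw [D1] at hD ⊢
  simp only [dot_eq_inner, inner_add_right, inner_sub_right, inner_smul_right] at hD ⊢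
  rw [add_div' _ _ _ hD.ne']
  exact div_pos hnum hD

lemma energy_gsP (hc : c ≠ 0) (hω : ‖ω‖ = 1) :
    energy n c (gsP n c p q ω) = energy n c p + N0 n c p q ω := by
  have hD := (D1_pos (p := p) (q := q) hc hω.le).ne'
  have hsq : c ^ 2 + ‖gsP n c p q ω‖ ^ 2 = (energy n c p + N0 n c p q ω) ^ 2 := by
    rw [gsP, norm_add_sq_real, norm_smul, hω, inner_smul_right, real_inner_comm,
      Real.norm_eq_abs, mul_one, sq_abs, ← add_assoc, ← add_assoc, ← sq_energy, aGS, N0]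
    rw [D1] at hD ⊢
    simp only [dot_eq_inner, inner_add_right, inner_sub_right, inner_smul_right] at hD ⊢
    field_simp
    ring
  rw [energy, hsq, Real.sqrt_sq (energy_add_N0_pos hc hω.le).le]

lemma energy_gsQ (hc : c ≠ 0) (hω : ‖ω‖ = 1) :
    energy n c (gsQ n c p q ω) = energy n c q - N0 n c p q ω := by
  rw [gsQ_eq_gsP_swap, energy_gsP hc hω, N0_comm, sub_eq_add_neg]

lemma energy_gsP_add_energy_gsQ (hc : c ≠ 0) (hω : ‖ω‖ = 1) :
    energy n c (gsP n c p q ω) + energy n c (gsQ n c p q ω) = energy n c p + energy n c q := by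
  rw [energy_gsP hc hω, energy_gsQ hc hω]
  ring

lemma inner_gsP (hω : ‖ω‖ = 1) : ⟪ω, gsP n c p q ω⟫ = ⟪ω, p⟫ + aGS n c p q ω := by
  rw [gsP, inner_add_right, inner_smul_right, real_inner_self_eq_norm_sq, hω, one_pow, mul_one]

lemma inner_gsQ (hω : ‖ω‖ = 1) : ⟪ω, gsQ n c p q ω⟫ = ⟪ω, q⟫ - aGS n c p q ω := by
  rw [gsQ_eq_gsP_swap, inner_gsP hω, aGS_comm, sub_eq_add_neg]

lemma energy_add_mul_aGS_sub_mul_N0 (hD : D1 n c p q ω ≠ 0) :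
    (energy n c p + energy n c q) * aGS n c p q ω - dot n ω (p + q) * N0 n c p q ω =
      2 * dot n ω (energy n c p • q - energy n c q • p) := by
  rw [aGS, N0]
  rw [D1] at hD ⊢
  field_simp

lemma dot_energy_smul_sub_gs (hc : c ≠ 0) (hω : ‖ω‖ = 1) :
    dot n ω (energy n c p • q - energy n c q • p) =
      dot n ω (energy n c (gsQ n c p q ω) • gsP n c p q ω -
        energy n c (gsP n c p q ω) • gsQ n c p q ω) := by
  have key := energy_add_mul_aGS_sub_mul_N0 (D1_pos (p := p) (q := q) hc hω.le).ne'
  simp only [dot_eq_inner, inner_sub_right, inner_smul_right, inner_add_right] at key ⊢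
  rw [energy_gsP hc hω, energy_gsQ hc hω, inner_gsP hω, inner_gsQ hω]
  linear_combination -key

lemma D1_gsP_gsQ (hc : c ≠ 0) (hω : ‖ω‖ = 1) :
    D1 n c (gsP n c p q ω) (gsQ n c p q ω) ω = D1 n c p q ω := by
  rw [D1, D1, gsP_add_gsQ, energy_gsP_add_energy_gsQ hc hω]

lemma aGS_gsP_gsQ (hc : c ≠ 0) (hω : ‖ω‖ = 1) :
    aGS n c (gsP n c p q ω) (gsQ n c p q ω) ω = -aGS n c p q ω := by
  have hm : dot n ω (energy n c (gsP n c p q ω) • gsQ n c p q ω -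
      energy n c (gsQ n c p q ω) • gsP n c p q ω) =
      -dot n ω (energy n c p • q - energy n c q • p) := by
    rw [dot_energy_smul_sub_gs (p := p) (q := q) hc hω]
    simp only [dot_eq_inner, inner_sub_right]
    ring
  rw [aGS, aGS, hm, D1_gsP_gsQ hc hω, energy_gsP_add_energy_gsQ hc hω]
  ring

lemma gsP_gsP_gsQ (hc : c ≠ 0) (hω : ‖ω‖ = 1) :
    gsP n c (gsP n c p q ω) (gsQ n c p q ω) ω = p := by
  rw [gsP, aGS_gsP_gsQ hc hω, gsP, neg_smul, add_neg_cancel_right]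

lemma gsQ_gsP_gsQ (hc : c ≠ 0) (hω : ‖ω‖ = 1) :
    gsQ n c (gsP n c p q ω) (gsQ n c p q ω) ω = q := by
  rw [gsQ, aGS_gsP_gsQ hc hω, gsQ, neg_smul, sub_neg_eq_add, sub_add_cancel]

end Collision

theorem statement14_general (n : ℕ) (c : ℝ) (hc : 0 < c)
    (p q : EuclideanSpace ℝ (Fin n)) (ω : EuclideanSpace ℝ (Fin n)) (hω : ‖ω‖ = 1) :
    dot n ω (energy n c p • q - energy n c q • p) =
      dot n ω (energy n c (gsQ n c p q ω) • gsP n c p q ω -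
        energy n c (gsP n c p q ω) • gsQ n c p q ω) ∧
    aGS n c (gsP n c p q ω) (gsQ n c p q ω) ω = -aGS n c p q ω ∧
    gsP n c (gsP n c p q ω) (gsQ n c p q ω) ω = p ∧
    gsQ n c (gsP n c p q ω) (gsQ n c p q ω) ω = q :=
  ⟨dot_energy_smul_sub_gs hc.ne' hω, aGS_gsP_gsQ hc.ne' hω, gsP_gsP_gsQ hc.ne' hω,
    gsQ_gsP_gsQ hc.ne' hω⟩

/-- the Glassey–Strauss post-collisional variables satisfy the invariance
`ω·(p⁰q − q⁰p) = ω·(q′⁰p′ − p′⁰q′)`; consequently `a(p′,q′,ω) = −a(p,q,ω)` and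
applying the Glassey–Strauss collision map to `(p′,q′)` with the same `ω`
returns `(p,q)`. -/
theorem statement14 (n : ℕ) (hn : 2 ≤ n) (c : ℝ) (hc : 0 < c)
    (p q : EuclideanSpace ℝ (Fin n)) (ω : EuclideanSpace ℝ (Fin n)) (hω : ‖ω‖ = 1) :
    dot n ω (energy n c p • q - energy n c q • p) =
      dot n ω (energy n c (gsQ n c p q ω) • gsP n c p q ω -
        energy n c (gsP n c p q ω) • gsQ n c p q ω) ∧
    aGS n c (gsP n c p q ω) (gsQ n c p q ω) ω = -aGS n c p q ω ∧
    gsP n c (gsP n c p q ω) (gsQ n c p q ω) ω = p ∧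
    gsQ n c (gsP n c p q ω) (gsQ n c p q ω) ω = q :=
  statement14_general n c hc p q ω hω

end RelBoltz
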